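/- Let G = (V, E) be a finite simple graph, E1 ⊆ E, and let G' be obtained from G by subdividing each edge of E1 twice. If every vertex cover of G has size at least m, then every vertex cover of G' has size at least m + |E1|. -/

import Mathlib

open SimpleGraph Finset

/-- The type of new vertices added when each edge of `E1` is subdivided twice:
for an edge `e = {u, v} ∈ E1`, the ordered pair `(u, v)` represents the new vertex
`v'_{e,u}` (the one adjacent to `u`), and `(v, u)` represents `v'_{e,v}`. -/
abbrev NewVert (V : Type*) (E1 : Finset (Sym2 V)) : Type _ :=
  {p : V × V // s(p.1, p.2) ∈ E1 ∧ p.1 ≠ p.2}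

/-- The graph `G'` obtained from `G` by subdividing each edge of `E1` twice:
an edge `e = {u, v} ∈ E1` is replaced by the path `u — v'_{e,u} — v'_{e,v} — v`,
and edges not in `E1` are kept unchanged. -/
def subdivide {V : Type*} (G : SimpleGraph V) (E1 : Finset (Sym2 V)) :
    SimpleGraph (V ⊕ NewVert V E1) where
  Adj x y :=
    match x, y with
    | Sum.inl u, Sum.inl w => G.Adj u w ∧ s(u, w) ∉ E1
    | Sum.inl u, Sum.inr p => u = p.val.1
    | Sum.inr p, Sum.inl u => u = p.val.1
    | Sum.inr p, Sum.inr q => p.val.1 = q.val.2 ∧ p.val.2 = q.val.1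
  symm := ⟨by
    rintro (u | p) (w | q) h
    · exact ⟨h.1.symm, fun hc => h.2 (by rwa [Sym2.eq_swap] at hc)⟩
    · exact h
    · exact h
    · exact ⟨h.2.symm, h.1.symm⟩⟩
  loopless := ⟨by
    rintro (u | p) h
    · exact G.irrefl h.1
    · exact p.prop.2 h.1⟩

/-- A set `S` of vertices is a vertex cover of `G` if every edge of `G` has at
least one endpoint in `S`. -/
def IsVertexCover {W : Type*} (H : SimpleGraph W) (S : Set W) : Prop :=
  ∀ ⦃u v : W⦄, H.Adj u v → u ∈ S ∨ v ∈ S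

/-! Let `S'` cover `G'`. Its old vertices `L` cover every edge of `G` except the edges
`T ⊆ E1` with no endpoint in `L`; adding one endpoint of each edge of `T` gives a cover of `G`,
so `m ≤ |L| + |T|`. On the other side, the middle edge of the path replacing `e ∈ E1` forces one
new vertex of `e` into `S'`, and both of them when `e ∈ T`, so `S'` has at least `|E1| + |T|`
new vertices. -/

theorem exists_isVertexCover_card_le_card_add_card {V : Type*} [DecidableEq V]
    {G : SimpleGraph V} (S : Finset V) (T : Finset (Sym2 V))
    (hS : ∀ ⦃u v : V⦄, G.Adj u v → s(u, v) ∉ T → u ∈ S ∨ v ∈ S) :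
    ∃ C : Finset V, _root_.IsVertexCover G ↑C ∧ #C ≤ #S + #T := by
  refine ⟨S ∪ T.image fun e => e.out.1, fun u v huv => ?_, ?_⟩
  · by_cases he : s(u, v) ∈ T
    · have hout : s(u, v).out.1 ∈ S ∪ T.image fun e => e.out.1 :=
        mem_union_right _ (mem_image_of_mem _ he)
      rcases Sym2.mem_iff.1 (Sym2.out_fst_mem s(u, v)) with h | h <;> rw [h] at hout
      exacts [.inl hout, .inr hout]
    · rcases hS huv he with h | h
      exacts [.inl (mem_union_left _ h), .inr (mem_union_left _ h)]
  · exact (card_union_le _ _).trans (Nat.add_le_add_left card_image_le _)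

namespace NewVert

variable {V : Type*} {E1 : Finset (Sym2 V)}

def edge (p : NewVert V E1) : Sym2 V := s(p.1.1, p.1.2)

theorem edge_mem (p : NewVert V E1) : p.edge ∈ E1 := p.2.1

end NewVert

def uncoveredEdges {V : Type*} [DecidableEq V] (E1 : Finset (Sym2 V)) (S : Finset V) :
    Finset (Sym2 V) :=
  E1.filter fun e => ∀ v ∈ S, v ∉ e

section Subdivide

variable {V : Type*} [DecidableEq V] {G : SimpleGraph V} {E1 : Finset (Sym2 V)}
  {S' : Finset (V ⊕ NewVert V E1)}

theorem IsVertexCover.covers_off_uncoveredEdges_toLeft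
    (hS' : _root_.IsVertexCover (subdivide G E1) ↑S') ⦃u v : V⦄ (huv : G.Adj u v)
    (hT : s(u, v) ∉ uncoveredEdges E1 S'.toLeft) : u ∈ S'.toLeft ∨ v ∈ S'.toLeft := by
  by_cases he : s(u, v) ∈ E1
  · simp only [uncoveredEdges, mem_filter, he, true_and, not_forall, not_not] at hT
    obtain ⟨w, hw, hwe⟩ := hT
    rcases Sym2.mem_iff.1 hwe with rfl | rfl <;> simp [hw]
  · simpa using hS' (show (subdivide G E1).Adj (.inl u) (.inl v) from ⟨huv, he⟩)

theorem IsVertexCover.card_fiber_pos (hS' : _root_.IsVertexCover (subdivide G E1) ↑S')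
    {u v : V} (huv : u ≠ v) (he : s(u, v) ∈ E1) :
    0 < #{p ∈ S'.toRight | p.edge = s(u, v)} := by
  let pu : NewVert V E1 := ⟨(u, v), he, huv⟩
  let pv : NewVert V E1 := ⟨(v, u), Sym2.eq_swap ▸ he, huv.symm⟩
  rw [card_pos]
  rcases hS' (show (subdivide G E1).Adj (.inr pu) (.inr pv) from ⟨rfl, rfl⟩) with h | h
  exacts [⟨pu, mem_filter.2 ⟨mem_toRight.2 h, rfl⟩⟩,
    ⟨pv, mem_filter.2 ⟨mem_toRight.2 h, Sym2.eq_swap⟩⟩]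

theorem IsVertexCover.two_le_card_fiber_of_mem_uncoveredEdges
    (hS' : _root_.IsVertexCover (subdivide G E1) ↑S') {u v : V} (huv : u ≠ v)
    (he : s(u, v) ∈ E1) (hT : s(u, v) ∈ uncoveredEdges E1 S'.toLeft) :
    2 ≤ #{p ∈ S'.toRight | p.edge = s(u, v)} := by
  let pu : NewVert V E1 := ⟨(u, v), he, huv⟩
  let pv : NewVert V E1 := ⟨(v, u), Sym2.eq_swap ▸ he, huv.symm⟩
  have hu : Sum.inl u ∉ S' := by simpa using (mem_filter.1 hT).2 u
  have hv : Sum.inl v ∉ S' := by simpa using (mem_filter.1 hT).2 v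
  have hpu : Sum.inr pu ∈ S' :=
    (hS' (show (subdivide G E1).Adj (.inl u) (.inr pu) from rfl)).resolve_left hu
  have hpv : Sum.inr pv ∈ S' :=
    (hS' (show (subdivide G E1).Adj (.inl v) (.inr pv) from rfl)).resolve_left hv
  have hne : pu ≠ pv := fun h => huv (congrArg (fun p : NewVert V E1 => p.1.1) h)
  calc 2 = #{pu, pv} := (card_pair hne).symm
    _ ≤ _ := card_le_card (by
      rw [insert_subset_iff, singleton_subset_iff]
      exact ⟨mem_filter.2 ⟨mem_toRight.2 hpu, rfl⟩,
        mem_filter.2 ⟨mem_toRight.2 hpv, Sym2.eq_swap⟩⟩)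

theorem IsVertexCover.card_add_card_uncoveredEdges_le_card_toRight
    (hE1 : ∀ e ∈ E1, ¬ e.IsDiag) (hS' : _root_.IsVertexCover (subdivide G E1) ↑S') :
    #E1 + #(uncoveredEdges E1 S'.toLeft) ≤ #S'.toRight := by
  have hsum : ∑ e ∈ E1, (1 + if e ∈ uncoveredEdges E1 S'.toLeft then 1 else 0) =
      #E1 + #(uncoveredEdges E1 S'.toLeft) := by
    rw [sum_add_distrib, sum_boole, uncoveredEdges, filter_mem_eq_inter,
      inter_eq_right.2 (filter_subset _ _)]
    simp
  rw [← hsum, card_eq_sum_card_fiberwise fun p _ => p.edge_mem]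
  refine sum_le_sum fun e he => ?_
  induction e using Sym2.ind with
  | _ u v =>
    have huv : u ≠ v := by simpa using hE1 _ he
    split_ifs with hT
    · exact hS'.two_le_card_fiber_of_mem_uncoveredEdges huv he hT
    · exact hS'.card_fiber_pos huv he

end Subdivide

/-- If every vertex cover of `G` has size at least `m`, then every vertex
cover of the graph `G'` obtained from `G` by subdividing each edge of `E1 ⊆ E(G)` twice
has size at least `m + |E1|`. -/
theorem statement4 {V : Type*} [Fintype V] [DecidableEq V] (G : SimpleGraph V)
    [DecidableRel G.Adj] (E1 : Finset (Sym2 V)) (hE1 : E1 ⊆ G.edgeFinset) (m : ℕ)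
    (hlb : ∀ S : Finset V, _root_.IsVertexCover G ↑S → m ≤ S.card) :
    ∀ S' : Finset (V ⊕ NewVert V E1),
      _root_.IsVertexCover (subdivide G E1) ↑S' → m + E1.card ≤ S'.card := by
  intro S' hS'
  obtain ⟨C, hC, hCcard⟩ := exists_isVertexCover_card_le_card_add_card S'.toLeft
    (uncoveredEdges E1 S'.toLeft) hS'.covers_off_uncoveredEdges_toLeft
  have hnew := hS'.card_add_card_uncoveredEdges_le_card_toRight
    fun e he => G.not_isDiag_of_mem_edgeSet (mem_edgeFinset.1 (hE1 he))
  have hsplit := card_toLeft_add_card_toRight (u := S')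
  have := hlb C hC
  omega
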